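/- arXiv:0711.0902 — 2 statements merged into one kernel-verified Lean document; each statement's English description precedes it below -/
import Mathlib

section
/- Let L = {(p₁,q₁),…,(p_n,q_n)} be a lattice diagram with its cells listed in increasing pseudo-lexicographic order, and let k ≥ 1. Then e_k(∂x₁,…,∂x_n) Δ_L(X;Y) = Σ_{1≤i₁<i₂<⋯<i_k≤n} ε(i₁,…,i_k) Δ_{e_k(i₁,…,i_k;L)}(X;Y), where e_k(i₁,…,i_k;L) is obtained from L by replacing the biexponents (p_{i₁},q_{i₁}),…,(p_{i_k},q_{i_k}) with (p_{i₁}−1,q_{i₁}),…,(p_{i_k}−1,q_{i_k}), and where each coefficient ε(i₁,…,i_k) is a nonnegative integer which is zero whenever the resulting list does not consist of n distinct cells in ℕ×ℕ (i.e. whenever some p_{i_j} = 0 or two resulting biexponents coincide). -/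
open MvPolynomial

noncomputable section

/-- The monomial differential operator `∂^m` applied to a polynomial `Q`:
if `m = (m_v)_v`, this is `∏_v (∂/∂x_v)^{m_v}` applied to `Q`. -/
def monDiff {σ : Type*} [DecidableEq σ] (m : σ →₀ ℕ) (Q : MvPolynomial σ ℚ) :
    MvPolynomial σ ℚ :=
  ∑ a ∈ Q.support,
    MvPolynomial.monomial (a - m) (Q.coeff a * ∏ v ∈ m.support, ((a v).descFactorial (m v) : ℚ))

/-- The differential operator `P(∂)` applied to `Q`. -/
def applyDiff {σ : Type*} [DecidableEq σ] (P Q : MvPolynomial σ ℚ) : MvPolynomial σ ℚ :=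
  ∑ m ∈ P.support, P.coeff m • monDiff m Q

/-- The linear span of `Q` and all its partial derivatives (of all orders),
i.e. the space `L_∂[Q]`. -/
def derivSpan {σ : Type*} [DecidableEq σ] (Q : MvPolynomial σ ℚ) :
    Submodule ℚ (MvPolynomial σ ℚ) :=
  Submodule.span ℚ {R | ∃ m : σ →₀ ℕ, R = monDiff m Q}

/-- Strict pseudo-lexicographic order: compare second coordinates first. -/
def plexLT {α : Type*} [LinearOrder α] (a b : α × α) : Prop :=
  a.2 < b.2 ∨ (a.2 = b.2 ∧ a.1 < b.1)

/-- Pseudo-lexicographic order on `ℕ × ℕ`. -/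
def plexLE (a b : ℕ × ℕ) : Prop :=
  a.2 < b.2 ∨ (a.2 = b.2 ∧ a.1 ≤ b.1)

instance : DecidableRel plexLE := fun a b => by unfold plexLE; exact inferInstance
instance : IsTrans (ℕ × ℕ) plexLE := ⟨by intro a b c hab hbc; unfold plexLE at *; omega⟩
instance : IsAntisymm (ℕ × ℕ) plexLE := ⟨by
  intro a b hab hba
  unfold plexLE at hab hba
  have h1 : a.1 = b.1 := by omega
  have h2 : a.2 = b.2 := by omega
  exact Prod.ext h1 h2⟩
instance : IsTotal (ℕ × ℕ) plexLE := ⟨by intro a b; unfold plexLE; omega⟩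

/-- Lexicographic order on `ℕ × ℕ`: compare first coordinates first. -/
def lexLE (a b : ℕ × ℕ) : Prop :=
  a.1 < b.1 ∨ (a.1 = b.1 ∧ a.2 ≤ b.2)

/-- Strict lexicographic order on `ℕ × ℕ`. -/
def lexLT (a b : ℕ × ℕ) : Prop :=
  a.1 < b.1 ∨ (a.1 = b.1 ∧ a.2 < b.2)

instance : DecidableRel lexLE := fun a b => by unfold lexLE; exact inferInstance
instance : IsTrans (ℕ × ℕ) lexLE := ⟨by intro a b c hab hbc; unfold lexLE at *; omega⟩
instance : IsAntisymm (ℕ × ℕ) lexLE := ⟨by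
  intro a b hab hba
  unfold lexLE at hab hba
  have h1 : a.1 = b.1 := by omega
  have h2 : a.2 = b.2 := by omega
  exact Prod.ext h1 h2⟩
instance : IsTotal (ℕ × ℕ) lexLE := ⟨by intro a b; unfold lexLE; omega⟩

/-- The lattice determinant of a list of `n` biexponents:
`Δ = det(x_i^{p_j} y_i^{q_j})`, in the ring `ℚ[x_1,…,x_n,y_1,…,y_n]`,
where `Sum.inl i` stands for `x_{i+1}` and `Sum.inr i` for `y_{i+1}`. -/
def deltaOfList (n : ℕ) (L : Fin n → ℕ × ℕ) : MvPolynomial (Fin n ⊕ Fin n) ℚ :=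
  Matrix.det (Matrix.of fun i j : Fin n =>
    X (Sum.inl i) ^ (L j).1 * X (Sum.inr i) ^ (L j).2)

/-- The lattice determinant of a lattice diagram (finite set of cells), the cells
being listed in increasing pseudo-lexicographic order; `0` if the diagram does not
have exactly `n` cells. -/
def deltaOfFinset (n : ℕ) (D : Finset (ℕ × ℕ)) : MvPolynomial (Fin n ⊕ Fin n) ℚ :=
  if h : D.card = n then
    deltaOfList n fun i => (D.sort plexLE).get ⟨i.1, by rw [Finset.length_sort, h]; exact i.2⟩
  else 0

open scoped Classical in
/-- The lattice determinant of a list of integer biexponents: `0` if some coordinate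
is negative (and `0` if two biexponents coincide, since then the determinant has two
equal columns). -/
def deltaOfListZ (n : ℕ) (L : Fin n → ℤ × ℤ) : MvPolynomial (Fin n ⊕ Fin n) ℚ :=
  if ∀ j, 0 ≤ (L j).1 ∧ 0 ≤ (L j).2 then
    deltaOfList n fun j => ((L j).1.toNat, (L j).2.toNat)
  else 0

/-- The Ferrers diagram of a partition with `h` rows and parts `μ 0 ≥ μ 1 ≥ …`:
the set of cells `(r, c)` with `r < h` and `c < μ r`. -/
def ferrers (h : ℕ) (μ : ℕ → ℕ) : Finset (ℕ × ℕ) :=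
  (Finset.range h ×ˢ Finset.range (μ 0)).filter fun rc => rc.2 < μ rc.1

/-- The shadow of the cell `(i, j)` in the diagram `F`. -/
def shadowF (F : Finset (ℕ × ℕ)) (i j : ℕ) : Finset (ℕ × ℕ) :=
  F.filter fun c => i ≤ c.1 ∧ j ≤ c.2

/-- The space `M^k_{i,j}(X,Y)`: the sum of the spaces `M_{μ/S}` over all `k`-element
subsets `S` of the shadow of `(i,j)` in the diagram `F` (of a partition of `n + k`). -/
def Mk (n k : ℕ) (F : Finset (ℕ × ℕ)) (i j : ℕ) :
    Submodule ℚ (MvPolynomial (Fin n ⊕ Fin n) ℚ) :=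
  ⨆ S ∈ Finset.powersetCard k (shadowF F i j), derivSpan (deltaOfFinset n (F \ S))

/-- The submodule of polynomials involving only the `x` variables
(elements of `Y`-degree `0`). -/
def onlyX (n : ℕ) : Submodule ℚ (MvPolynomial (Fin n ⊕ Fin n) ℚ) :=
  Subalgebra.toSubmodule (MvPolynomial.supported ℚ (Set.range Sum.inl))

/-- The space `M^k_{i,j}(X)`: the elements of `M^k_{i,j}(X,Y)` of `Y`-degree 0. -/
def MkX (n k : ℕ) (F : Finset (ℕ × ℕ)) (i j : ℕ) :
    Submodule ℚ (MvPolynomial (Fin n ⊕ Fin n) ℚ) :=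
  Mk n k F i j ⊓ onlyX n

end

/-- The list of biexponents obtained from `L` by replacing, for each `j ∈ S`, the
biexponent `(p_j, q_j)` by `(p_j - 1, q_j)`, and leaving the others unchanged. -/
noncomputable def ekMod (n : ℕ) (L : Fin n → ℕ × ℕ) (S : Finset (Fin n)) : Fin n → ℤ × ℤ :=
  fun j => if j ∈ S then (((L j).1 : ℤ) - 1, ((L j).2 : ℤ))
    else (((L j).1 : ℤ), ((L j).2 : ℤ))

/-! By the Leibniz formula `Δ_L = ∑_σ sign σ ∏_j x_{σ j}^{p_j} y_{σ j}^{q_j}`, a monomial in which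
`x_i` carries the exponent `p_{σ⁻¹ i}`. The operator `∏_{i ∈ T} ∂x_i` sends the `σ`-term to
`∏_{i ∈ T} p_{σ⁻¹ i}` times the same monomial with the exponents of `x_i`, `i ∈ T`, lowered by one.
Writing `T = σ(S)`, this is `∏_{j ∈ S} p_j` times the `σ`-term of `Δ_{e_k(S;L)}`; summing over `σ`
and `S` gives the formula with `ε(S) = ∏_{j ∈ S} p_j`, which vanishes when some `p_j = 0`, while a
repeated biexponent makes the determinant vanish. -/

lemma Finsupp.finset_sum_single_one_apply {τ : Type*} [DecidableEq τ] (U : Finset τ) (w : τ) :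
    (∑ v ∈ U, Finsupp.single v 1 : τ →₀ ℕ) w = if w ∈ U then 1 else 0 := by
  simp [Finsupp.finsetSum_apply, Finsupp.single_apply]

namespace MvPolynomial

variable {τ : Type*} [DecidableEq τ]

lemma monDiff_eq_sum (m : τ →₀ ℕ) (Q : MvPolynomial τ ℚ) :
    monDiff m Q = (AddMonoidAlgebra.coeff Q).sum fun a c =>
      monomial (a - m) (c * ∏ v ∈ m.support, ((a v).descFactorial (m v) : ℚ)) := by
  rw [monDiff, sum_def]

lemma applyDiff_eq_sum (P Q : MvPolynomial τ ℚ) :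
    applyDiff P Q = (AddMonoidAlgebra.coeff P).sum fun m c => c • monDiff m Q := by
  rw [applyDiff, sum_def]

lemma monDiff_monomial (m b : τ →₀ ℕ) (c : ℚ) :
    monDiff m (monomial b c)
      = monomial (b - m) (c * ∏ v ∈ m.support, ((b v).descFactorial (m v) : ℚ)) := by
  rw [monDiff_eq_sum, sum_monomial_eq (by simp)]

lemma monDiff_sum {ι : Type*} (s : Finset ι) (m : τ →₀ ℕ) (Q : ι → MvPolynomial τ ℚ) :
    monDiff m (∑ i ∈ s, Q i) = ∑ i ∈ s, monDiff m (Q i) := by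
  simp only [monDiff_eq_sum, AddMonoidAlgebra.coeff_sum]
  exact (Finsupp.sum_finsetSum_index (by simp) (by simp [add_mul])).symm

lemma sum_applyDiff {ι : Type*} (s : Finset ι) (P : ι → MvPolynomial τ ℚ) (Q : MvPolynomial τ ℚ) :
    applyDiff (∑ i ∈ s, P i) Q = ∑ i ∈ s, applyDiff (P i) Q := by
  simp only [applyDiff_eq_sum, AddMonoidAlgebra.coeff_sum]
  exact (Finsupp.sum_finsetSum_index (by simp) (by simp [add_smul])).symm

lemma applyDiff_prod_X (U : Finset τ) (Q : MvPolynomial τ ℚ) :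
    applyDiff (∏ v ∈ U, X v) Q = monDiff (∑ v ∈ U, Finsupp.single v 1) Q := by
  simp only [X, ← monomial_sum_one]
  rw [applyDiff_eq_sum, sum_monomial_eq (zero_smul ℚ _), one_smul]

lemma applyDiff_sum {ι : Type*} (s : Finset ι) (P : MvPolynomial τ ℚ) (Q : ι → MvPolynomial τ ℚ) :
    applyDiff P (∑ i ∈ s, Q i) = ∑ i ∈ s, applyDiff P (Q i) := by
  simp only [applyDiff, monDiff_sum, Finset.smul_sum]
  exact Finset.sum_comm

lemma applyDiff_prod_X_monomial (U : Finset τ) (b : τ →₀ ℕ) (c : ℚ) :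
    applyDiff (∏ v ∈ U, X v) (monomial b c)
      = monomial (b - ∑ v ∈ U, Finsupp.single v 1) (c * ∏ v ∈ U, (b v : ℚ)) := by
  have hU : (∑ v ∈ U, Finsupp.single v 1 : τ →₀ ℕ).support ⊆ U := fun v hv => by
    by_contra h
    simp [Finsupp.finset_sum_single_one_apply, h] at hv
  rw [applyDiff_prod_X, monDiff_monomial,
    Finset.prod_subset hU fun v _ hv => by simp [Finsupp.notMem_support_iff.mp hv]]
  congr 2
  exact Finset.prod_congr rfl fun v hv => by simp [Finsupp.finset_sum_single_one_apply, hv]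

end MvPolynomial

section LatticeDeterminant

variable {n : ℕ}

noncomputable def latticeExponent (L : Fin n → ℕ × ℕ) (σ : Equiv.Perm (Fin n)) :
    (Fin n ⊕ Fin n) →₀ ℕ :=
  Finsupp.equivFunOnFinite.symm (Sum.elim (fun i => (L (σ⁻¹ i)).1) fun i => (L (σ⁻¹ i)).2)

@[simp]
lemma latticeExponent_inl (L : Fin n → ℕ × ℕ) (σ : Equiv.Perm (Fin n)) (i : Fin n) :
    latticeExponent L σ (Sum.inl i) = (L (σ⁻¹ i)).1 :=
  rfl

@[simp]
lemma latticeExponent_inr (L : Fin n → ℕ × ℕ) (σ : Equiv.Perm (Fin n)) (i : Fin n) :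
    latticeExponent L σ (Sum.inr i) = (L (σ⁻¹ i)).2 :=
  rfl

lemma deltaOfList_eq_sum_monomial (L : Fin n → ℕ × ℕ) :
    deltaOfList n L
      = ∑ σ : Equiv.Perm (Fin n), monomial (latticeExponent L σ) ((Equiv.Perm.sign σ : ℤ) : ℚ) := by
  rw [deltaOfList, Matrix.det_apply]
  refine Finset.sum_congr rfl fun σ _ => ?_
  rw [monomial_eq, Finsupp.prod_fintype _ _ (by simp), Fintype.prod_sum_type,
    ← Finset.prod_mul_distrib]
  simp only [Units.smul_def, Matrix.of_apply, Sum.elim_inl, Sum.elim_inr,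
    Finsupp.coe_equivFunOnFinite_symm, latticeExponent]
  rw [← Equiv.prod_comp σ (fun i => X (Sum.inl i) ^ (L (σ⁻¹ i)).1 * X (Sum.inr i) ^ (L (σ⁻¹ i)).2)]
  simp [zsmul_eq_mul]

/-- `ekMod n L S` inside `ℕ × ℕ`. The subtraction truncates, which only matters when some
`p_j = 0` for `j ∈ S`, and then the coefficient `∏_{j ∈ S} p_j` vanishes. -/
def ekModNat (L : Fin n → ℕ × ℕ) (S : Finset (Fin n)) : Fin n → ℕ × ℕ :=
  fun j => if j ∈ S then ((L j).1 - 1, (L j).2) else L j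

lemma latticeExponent_ekModNat (L : Fin n → ℕ × ℕ) (S : Finset (Fin n)) (σ : Equiv.Perm (Fin n)) :
    latticeExponent (ekModNat L S) σ
      = latticeExponent L σ - ∑ v ∈ (S.map σ.toEmbedding).map .inl, Finsupp.single v 1 := by
  ext (i | i) <;>
    simp only [Finsupp.tsub_apply, Finsupp.finset_sum_single_one_apply, latticeExponent_inl,
      latticeExponent_inr, ekModNat] <;>
    split_ifs <;> simp_all

lemma applyDiff_prod_X_inl_monomial_latticeExponent (L : Fin n → ℕ × ℕ) (S : Finset (Fin n))
    (σ : Equiv.Perm (Fin n)) (c : ℚ) :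
    applyDiff (∏ i ∈ S.map σ.toEmbedding, X (Sum.inl i)) (monomial (latticeExponent L σ) c)
      = (∏ j ∈ S, ((L j).1 : ℚ)) • monomial (latticeExponent (ekModNat L S) σ) c := by
  have hX : ∏ i ∈ S.map σ.toEmbedding, X (Sum.inl i)
      = ∏ v ∈ (S.map σ.toEmbedding).map .inl, (X v : MvPolynomial (Fin n ⊕ Fin n) ℚ) :=
    (Finset.prod_map _ Function.Embedding.inl X).symm
  rw [hX, applyDiff_prod_X_monomial, latticeExponent_ekModNat,
    smul_monomial, smul_eq_mul, mul_comm]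
  simp

lemma Finset.sum_powersetCard_univ_map_perm {ι β : Type*} [Fintype ι] [AddCommMonoid β]
    (σ : Equiv.Perm ι) (k : ℕ) (f : Finset ι → β) :
    ∑ T ∈ Finset.powersetCard k Finset.univ, f T
      = ∑ S ∈ Finset.powersetCard k Finset.univ, f (S.map σ.toEmbedding) := by
  conv_lhs => rw [← Finset.map_univ_equiv σ, Finset.powersetCard_map, Finset.sum_map]
  rfl

theorem applyDiff_esymm_deltaOfList (k : ℕ) (L : Fin n → ℕ × ℕ) :
    applyDiff (∑ T ∈ Finset.powersetCard k Finset.univ, ∏ i ∈ T, X (Sum.inl i)) (deltaOfList n L)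
      = ∑ S ∈ Finset.powersetCard k Finset.univ,
          (∏ j ∈ S, ((L j).1 : ℚ)) • deltaOfList n (ekModNat L S) := by
  simp only [sum_applyDiff, deltaOfList_eq_sum_monomial, applyDiff_sum, Finset.smul_sum]
  simp only [Finset.sum_comm (s := Finset.powersetCard k (Finset.univ : Finset (Fin n)))]
  refine Finset.sum_congr rfl fun σ _ => ?_
  rw [Finset.sum_powersetCard_univ_map_perm σ]
  simp only [applyDiff_prod_X_inl_monomial_latticeExponent]

lemma deltaOfList_eq_zero_of_not_injective {L : Fin n → ℕ × ℕ} (hL : ¬ Function.Injective L) :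
    deltaOfList n L = 0 := by
  obtain ⟨a, b, hab, hne⟩ := Function.not_injective_iff.mp hL
  exact Matrix.det_zero_of_column_eq hne fun i => by simp [hab]

lemma deltaOfListZ_natCast (L : Fin n → ℕ × ℕ) :
    deltaOfListZ n (Prod.map Nat.cast Nat.cast ∘ L) = deltaOfList n L := by
  simp [deltaOfListZ]

lemma ekMod_eq_natCast_ekModNat {L : Fin n → ℕ × ℕ} {S : Finset (Fin n)}
    (hS : ∀ j ∈ S, (L j).1 ≠ 0) :
    ekMod n L S = Prod.map Nat.cast Nat.cast ∘ ekModNat L S := by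
  ext j
  · by_cases hj : j ∈ S
    · simp [ekMod, ekModNat, hj, Nat.cast_sub (Nat.one_le_iff_ne_zero.mpr (hS j hj))]
    · simp [ekMod, ekModNat, hj]
  · by_cases hj : j ∈ S <;> simp [ekMod, ekModNat, hj]

lemma prod_smul_deltaOfList_ekModNat (L : Fin n → ℕ × ℕ) (S : Finset (Fin n)) :
    (∏ j ∈ S, ((L j).1 : ℚ)) • deltaOfList n (ekModNat L S)
      = ((if Function.Injective (ekMod n L S) then ∏ j ∈ S, (L j).1 else 0 : ℕ) : ℚ) •
          deltaOfListZ n (ekMod n L S) := by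
  by_cases h0 : ∃ j ∈ S, (L j).1 = 0
  · obtain ⟨j, hj, hj0⟩ := h0
    have hprod : ∏ j ∈ S, (L j).1 = 0 := Finset.prod_eq_zero hj hj0
    simp [← Nat.cast_prod, hprod]
  push Not at h0
  have hcast : Function.Injective (Prod.map (Nat.cast : ℕ → ℤ) (Nat.cast : ℕ → ℤ)) :=
    Prod.map_injective.mpr ⟨Nat.cast_injective, Nat.cast_injective⟩
  rw [ekMod_eq_natCast_ekModNat h0, deltaOfListZ_natCast]
  by_cases hinj : Function.Injective (ekModNat L S)
  · simp [hcast.of_comp_iff, hinj]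
  · simp [deltaOfList_eq_zero_of_not_injective hinj]

end LatticeDeterminant

theorem statement1_general (n k : ℕ) (L : Fin n → ℕ × ℕ) :
    ∃ ε : Finset (Fin n) → ℕ,
      applyDiff
          (∑ S ∈ Finset.powersetCard k (Finset.univ : Finset (Fin n)),
            ∏ i ∈ S, X (Sum.inl i))
          (deltaOfList n L)
        = ∑ S ∈ Finset.powersetCard k (Finset.univ : Finset (Fin n)),
            (ε S : ℚ) • deltaOfListZ n (ekMod n L S) ∧
      ∀ S ∈ Finset.powersetCard k (Finset.univ : Finset (Fin n)),
        ((∃ j ∈ S, (L j).1 = 0) ∨ ¬ Function.Injective (ekMod n L S)) → ε S = 0 := by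
  refine ⟨fun S => if Function.Injective (ekMod n L S) then ∏ j ∈ S, (L j).1 else 0, ?_, ?_⟩
  · rw [applyDiff_esymm_deltaOfList]
    exact Finset.sum_congr rfl fun S _ => prod_smul_deltaOfList_ekModNat L S
  · rintro S - (⟨j, hj, hj0⟩ | hinj)
    · exact ite_eq_right_iff.mpr fun _ => Finset.prod_eq_zero hj hj0
    · exact if_neg hinj

/-- Proposition 2: action of the elementary symmetric polynomial `e_k(∂X)` on a
lattice diagram polynomial. -/
theorem statement1 (n k : ℕ) (hk : 1 ≤ k) (L : Fin n → ℕ × ℕ)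
    (hsort : ∀ i j : Fin n, i < j → plexLT (L i) (L j)) :
    ∃ ε : Finset (Fin n) → ℕ,
      applyDiff
          (∑ S ∈ Finset.powersetCard k (Finset.univ : Finset (Fin n)),
            ∏ i ∈ S, X (Sum.inl i))
          (deltaOfList n L)
        = ∑ S ∈ Finset.powersetCard k (Finset.univ : Finset (Fin n)),
            (ε S : ℚ) • deltaOfListZ n (ekMod n L S) ∧
      ∀ S ∈ Finset.powersetCard k (Finset.univ : Finset (Fin n)),
        ((∃ j ∈ S, (L j).1 = 0) ∨ ¬ Function.Injective (ekMod n L S)) → ε S = 0 :=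
  statement1_general n k L
end

section
/- Let μ = (3,2), a partition of 5, so that removing 3 cells leaves diagrams with n = 2 cells and polynomials in ℚ[x₁,x₂,y₁,y₂]. Then Δ_{μ/{(0,0),(1,0),(0,2)}} does not belong to the subspace M_{μ/{(0,0),(1,0),(0,1)}} + M_{μ/{(0,0),(0,1),(0,2)}}. -/
/-!
For the three diagrams of the statement the lattice determinants are binomials:
`Δ_{μ/{(0,0),(1,0),(0,2)}} = x₂y₁y₂ - x₁y₁y₂`, `Δ_{μ/{(0,0),(1,0),(0,1)}} = x₁y₁y₂² - x₂y₁²y₂` and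
`Δ_{μ/{(0,0),(0,1),(0,2)}} = x₁x₂y₂ - x₁x₂y₁`. The linear form `φ = [x₂y₁y₂] + 2 [x₁y₂²]`
(a combination of coefficients) separates the first from the sum of the derivative spans of the
other two. No monomial of the third determinant is divisible by `x₂y₁y₂` or `x₁y₂²`, so `φ` kills
all its derivatives; the only derivative of the second one on which `φ` can be nonzero is
`∂_{y₁}(x₁y₁y₂² - x₂y₁²y₂) = x₁y₂² - 2x₂y₁y₂`, and `φ` vanishes there by the choice of the
weight `2`. But `φ(x₂y₁y₂ - x₁y₁y₂) = 1`.
-/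

open MvPolynomial

section MonDiff

variable {σ : Type*} [DecidableEq σ]

theorem coeff_monDiff (m t : σ →₀ ℕ) (Q : MvPolynomial σ ℚ) :
    (monDiff m Q).coeff t =
      Q.coeff (t + m) * ∏ v ∈ m.support, (((t + m) v).descFactorial (m v) : ℚ) := by
  rw [monDiff, coeff_sum]
  simp_rw [coeff_monomial]
  rw [Finset.sum_eq_single (t + m)]
  · simp
  · intro a _ hne
    split_ifs with h
    · have hlt : ¬ m ≤ a := fun hle => hne (by rw [← h, tsub_add_cancel_of_le hle])
      obtain ⟨v, hv⟩ : ∃ v, a v < m v := by simpa [Finsupp.le_def] using hlt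
      rw [Finset.prod_eq_zero (i := v) (by simp only [Finsupp.mem_support_iff]; omega)
        (by simp [Nat.descFactorial_eq_zero_iff_lt.2 hv]), mul_zero]
    · rfl
  · intro h
    simp [notMem_support_iff.mp h]

theorem derivSpan_le_ker {Q : MvPolynomial σ ℚ} {φ : MvPolynomial σ ℚ →ₗ[ℚ] ℚ}
    (h : ∀ m, φ (monDiff m Q) = 0) : derivSpan Q ≤ LinearMap.ker φ :=
  Submodule.span_le.2 fun _ ⟨m, hm⟩ => hm ▸ h m

theorem notMem_derivSpan_sup_of_separating {P Q R : MvPolynomial σ ℚ}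
    (φ : MvPolynomial σ ℚ →ₗ[ℚ] ℚ) (hP : ∀ m, φ (monDiff m P) = 0)
    (hQ : ∀ m, φ (monDiff m Q) = 0) (hR : φ R ≠ 0) :
    R ∉ derivSpan P ⊔ derivSpan Q :=
  fun hmem => hR (sup_le (derivSpan_le_ker hP) (derivSpan_le_ker hQ) hmem)

end MonDiff

/-- The exponent of `x₁^a x₂^b y₁^c y₂^d`. -/
noncomputable def exponent (a b c d : ℕ) : Fin 2 ⊕ Fin 2 →₀ ℕ :=
  .single (.inl 0) a + .single (.inl 1) b + .single (.inr 0) c + .single (.inr 1) d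

theorem eq_exponent (m : Fin 2 ⊕ Fin 2 →₀ ℕ) :
    m = exponent (m (.inl 0)) (m (.inl 1)) (m (.inr 0)) (m (.inr 1)) := by
  ext (i | i) <;> fin_cases i <;> simp [exponent]

theorem exponent_add (a b c d a' b' c' d' : ℕ) :
    exponent a b c d + exponent a' b' c' d' = exponent (a + a') (b + b') (c + c') (d + d') := by
  ext (i | i) <;> fin_cases i <;> simp [exponent]

theorem exponent_inj {a b c d a' b' c' d' : ℕ} :
    exponent a b c d = exponent a' b' c' d' ↔ a = a' ∧ b = b' ∧ c = c' ∧ d = d' := by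
  constructor
  · intro h
    have := congr_arg (fun m => (m (.inl 0), m (.inl 1), m (.inr 0), m (.inr 1))) h
    simpa [exponent, Finsupp.single_apply] using this
  · rintro ⟨rfl, rfl, rfl, rfl⟩
    rfl

theorem prod_descFactorial_exponent (a b c d a' b' c' d' : ℕ) :
    ∏ v ∈ (exponent a b c d).support,
        ((exponent a' b' c' d' v).descFactorial (exponent a b c d v) : ℚ) =
      a'.descFactorial a * b'.descFactorial b * c'.descFactorial c * d'.descFactorial d := by
  rw [Finset.prod_subset (Finset.subset_univ _) fun v _ hv => by
    simp [Finsupp.notMem_support_iff.mp hv], Fintype.prod_sum_type, Fin.prod_univ_two,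
    Fin.prod_univ_two]
  simp [exponent, mul_assoc]

theorem deltaOfFinset_pair {p q : ℕ × ℕ} (h : plexLT p q) :
    deltaOfFinset 2 {p, q} =
      monomial (exponent p.1 q.1 p.2 q.2) 1 - monomial (exponent q.1 p.1 q.2 p.2) 1 := by
  have hne : p ≠ q := by rintro rfl; unfold plexLT at h; omega
  have hsort : ({p, q} : Finset (ℕ × ℕ)).sort plexLE = [p, q] := by
    rw [Finset.sort_insert plexLE (fun b hb => by
      rw [Finset.mem_singleton.1 hb]; unfold plexLT at h; unfold plexLE; omega)
      (by simpa using hne), Finset.sort_singleton]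
  rw [deltaOfFinset, dif_pos (Finset.card_pair hne), deltaOfList, Matrix.det_fin_two]
  simp only [List.get_of_eq hsort, Matrix.of_apply, List.get_eq_getElem, Fin.val_zero,
    Fin.val_one, List.getElem_cons_zero, List.getElem_cons_succ, X_pow_eq_monomial, monomial_mul,
    mul_one, exponent]
  congr 2 <;> abel_nf

noncomputable def separator : MvPolynomial (Fin 2 ⊕ Fin 2) ℚ →ₗ[ℚ] ℚ :=
  lcoeff ℚ (exponent 0 1 1 1) + (2 : ℚ) • lcoeff ℚ (exponent 1 0 0 2)

theorem separator_monDiff_delta_11_02 (m : Fin 2 ⊕ Fin 2 →₀ ℕ) :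
    separator (monDiff m (deltaOfFinset 2 {(1, 1), (0, 2)})) = 0 := by
  obtain ⟨a, b, c, d, rfl⟩ : ∃ a b c d, m = exponent a b c d := ⟨_, _, _, _, eq_exponent m⟩
  rw [deltaOfFinset_pair (by simp [plexLT])]
  simp only [separator, LinearMap.add_apply, LinearMap.smul_apply, lcoeff_apply, coeff_monDiff,
    exponent_add, prod_descFactorial_exponent, coeff_sub, coeff_monomial, exponent_inj]
  split_ifs <;> try omega
  · obtain ⟨rfl, rfl, rfl, rfl⟩ : a = 0 ∧ b = 0 ∧ c = 1 ∧ d = 0 := by omega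
    norm_num [Nat.descFactorial]
  · simp

theorem separator_monDiff_delta_10_11 (m : Fin 2 ⊕ Fin 2 →₀ ℕ) :
    separator (monDiff m (deltaOfFinset 2 {(1, 0), (1, 1)})) = 0 := by
  obtain ⟨a, b, c, d, rfl⟩ : ∃ a b c d, m = exponent a b c d := ⟨_, _, _, _, eq_exponent m⟩
  rw [deltaOfFinset_pair (by simp [plexLT])]
  simp only [separator, LinearMap.add_apply, LinearMap.smul_apply, lcoeff_apply, coeff_monDiff,
    exponent_add, prod_descFactorial_exponent, coeff_sub, coeff_monomial, exponent_inj]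
  split_ifs <;> first | omega | simp

theorem separator_delta_01_11 : separator (deltaOfFinset 2 {(0, 1), (1, 1)}) = 1 := by
  rw [deltaOfFinset_pair (by simp [plexLT])]
  simp [separator, coeff_monomial, exponent_inj]

/-- The counterexample after Remark 3: for `μ = (3,2)` (a partition of 5, so `n = 2`),
`Δ_{μ/{(0,0),(1,0),(0,2)}}` is not in `M_{μ/{(0,0),(1,0),(0,1)}} + M_{μ/{(0,0),(0,1),(0,2)}}`. -/
theorem statement5 :
    deltaOfFinset 2
        (({(0, 0), (0, 1), (0, 2), (1, 0), (1, 1)} : Finset (ℕ × ℕ))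
          \ {(0, 0), (1, 0), (0, 2)})
      ∉ derivSpan (deltaOfFinset 2
            (({(0, 0), (0, 1), (0, 2), (1, 0), (1, 1)} : Finset (ℕ × ℕ))
              \ {(0, 0), (1, 0), (0, 1)}))
        ⊔ derivSpan (deltaOfFinset 2
            (({(0, 0), (0, 1), (0, 2), (1, 0), (1, 1)} : Finset (ℕ × ℕ))
              \ {(0, 0), (0, 1), (0, 2)})) := by
  rw [show ({(0, 0), (0, 1), (0, 2), (1, 0), (1, 1)} : Finset (ℕ × ℕ)) \ {(0, 0), (1, 0), (0, 2)}
      = {(0, 1), (1, 1)} by decide,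
    show ({(0, 0), (0, 1), (0, 2), (1, 0), (1, 1)} : Finset (ℕ × ℕ)) \ {(0, 0), (1, 0), (0, 1)}
      = {(1, 1), (0, 2)} by decide,
    show ({(0, 0), (0, 1), (0, 2), (1, 0), (1, 1)} : Finset (ℕ × ℕ)) \ {(0, 0), (0, 1), (0, 2)}
      = {(1, 0), (1, 1)} by decide]
  exact notMem_derivSpan_sup_of_separating separator separator_monDiff_delta_11_02
    separator_monDiff_delta_10_11 (by rw [separator_delta_01_11]; exact one_ne_zero)
end
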